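/- arXiv:1302.2551 — 5 statements merged into one kernel-verified Lean document; each statement's English description precedes it below -/
import Mathlib

section
/- The no-wait flowshop distance function δ satisfies the triangle inequality: for any three jobs i, k, j (each given by m nonnegative processing times), δ(i,j) ≤ δ(i,k) + δ(k,j). -/
/-- The no-wait flowshop minimum start-time delay between job `A` and job `B`
on `m` machines: `δ(A,B) = max_{q=1..m} (Σ_{k=1}^q A_k − Σ_{k=1}^{q-1} B_k)`
(machines indexed from 0). -/
noncomputable def delta (m : ℕ) (hm : 0 < m) (A B : ℕ → ℝ) : ℝ :=
  (Finset.range m).sup' (Finset.nonempty_range_iff.mpr hm.ne') fun q =>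
    (∑ k ∈ Finset.range (q + 1), A k) - ∑ k ∈ Finset.range q, B k

/-- the no-wait flowshop distance `δ` satisfies the triangle
inequality, for jobs with nonnegative processing times. -/
theorem delta_triangle (m : ℕ) (hm : 0 < m) (ti tk tj : ℕ → ℝ)
    (hti : ∀ q, 0 ≤ ti q) (htk : ∀ q, 0 ≤ tk q) (htj : ∀ q, 0 ≤ tj q) :
    delta m hm ti tj ≤ delta m hm ti tk + delta m hm tk tj := by
  unfold delta
  apply Finset.sup'_le
  intro q hq
  have h1 := Finset.le_sup' (f := fun q =>
    (∑ k ∈ Finset.range (q + 1), ti k) - ∑ k ∈ Finset.range q, tk k) hq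
  have h2 := Finset.le_sup' (f := fun q =>
    (∑ k ∈ Finset.range (q + 1), tk k) - ∑ k ∈ Finset.range q, tj k) hq
  have h3 : ∑ k ∈ Finset.range q, tk k ≤ ∑ k ∈ Finset.range (q + 1), tk k := by
    rw [Finset.sum_range_succ]; linarith [htk q]
  linarith
end

section
/- Concatenation lemma: if A = a_1·a_2·…·a_k and B = b_1·b_2·…·b_k are jobs formed by concatenating the machine-wise processing time vectors of jobs a_i and b_i, where all a_i and b_i belong to the family 𝒥(D) of jobs B_0^D,…,B_D^D, then δ(A,B) = max{δ(a_1,b_1),…,δ(a_k,b_k)}. -/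
/-- The building-block job `B_i^D` on `2D` machines: `D - i` zero-length
operations, then `D` unit-length operations, then `i` zero-length operations. -/
noncomputable def Bjob (D i : ℕ) : ℕ → ℝ := fun k =>
  if D - i ≤ k ∧ k < 2 * D - i then 1 else 0

lemma Bjob_sum (D i : ℕ) (hi : i ≤ D) :
    ∑ p ∈ Finset.range (2 * D), Bjob D i p = (D : ℝ) := by
  have h : ∀ p, Bjob D i p = if p ∈ Finset.Ico (D - i) (2 * D - i) then (1:ℝ) else 0 := by
    intro p; simp [Bjob, Finset.mem_Ico]
  simp_rw [h]
  rw [Finset.sum_ite_mem]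
  have hsub : Finset.Ico (D - i) (2 * D - i) ⊆ Finset.range (2 * D) := by
    intro x hx; simp only [Finset.mem_Ico] at hx; simp only [Finset.mem_range]; omega
  rw [Finset.inter_eq_right.mpr hsub, Finset.sum_const, Nat.card_Ico, nsmul_eq_mul, mul_one]
  congr 1
  omega

lemma concat_sum (D : ℕ) (hD : 0 < D) (r : ℕ → ℕ) :
    ∀ j t, t ≤ 2 * D → (∀ i < j, r i ≤ D) → r j ≤ D ∨ t = t →
    ∑ p ∈ Finset.range (j * (2 * D) + t), Bjob D (r (p / (2 * D))) (p % (2 * D)) =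
      j * D + ∑ p ∈ Finset.range t, Bjob D (r j) p := by
  intro j
  induction j with
  | zero =>
    intro t ht _ _
    simp only [Nat.zero_mul, Nat.zero_add, Nat.cast_zero, zero_mul, zero_add]
    refine Finset.sum_congr rfl fun p hp => ?_
    rw [Finset.mem_range] at hp
    have hp2 : p < 2 * D := lt_of_lt_of_le hp ht
    rw [Nat.div_eq_of_lt hp2, Nat.mod_eq_of_lt hp2]
  | succ j ih =>
    intro t ht hr _
    have h1 : (j+1) * (2*D) + t = (j * (2*D) + 2*D) + t := by ring
    rw [h1, Finset.sum_range_add]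
    have h2 := ih (2*D) le_rfl (fun i hi => hr i (by omega)) (Or.inr rfl)
    rw [h2, Bjob_sum D (r j) (hr j (by omega))]
    have h3 : ∀ p ∈ Finset.range t,
        Bjob D (r ((j*(2*D)+2*D + p) / (2*D))) ((j*(2*D)+2*D + p) % (2*D))
          = Bjob D (r (j+1)) p := by
      intro p hp
      rw [Finset.mem_range] at hp
      have hp2 : p < 2 * D := lt_of_lt_of_le hp ht
      have hd : (j*(2*D)+2*D + p) / (2*D) = j + 1 := by
        rw [show j*(2*D)+2*D+p = p + (j+1)*(2*D) by ring,
          Nat.add_mul_div_right _ _ (by omega : 0 < 2*D), Nat.div_eq_of_lt hp2]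
        omega
      have hm : (j*(2*D)+2*D + p) % (2*D) = p := by
        rw [show j*(2*D)+2*D+p = p + (j+1)*(2*D) by ring,
          Nat.add_mul_mod_self_right, Nat.mod_eq_of_lt hp2]
      rw [hd, hm]
    rw [Finset.sum_congr rfl h3]
    push_cast
    ring

lemma term_eq (D k : ℕ) (hD : 0 < D) (r s : ℕ → ℕ)
    (hr : ∀ i < k, r i ≤ D) (hs : ∀ i < k, s i ≤ D)
    (j t : ℕ) (hj : j < k) (ht : t < 2*D) :
    (∑ p ∈ Finset.range (j*(2*D)+t + 1), Bjob D (r (p/(2*D))) (p%(2*D))) -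
      ∑ p ∈ Finset.range (j*(2*D)+t), Bjob D (s (p/(2*D))) (p%(2*D)) =
    (∑ p ∈ Finset.range (t+1), Bjob D (r j) p) - ∑ p ∈ Finset.range t, Bjob D (s j) p := by
  have h1 := concat_sum D hD r j (t+1) (by omega) (fun i hi => hr i (by omega)) (Or.inr rfl)
  have h2 := concat_sum D hD s j t (by omega) (fun i hi => hs i (by omega)) (Or.inr rfl)
  rw [show j*(2*D)+t+1 = j*(2*D)+(t+1) by omega, h1, h2]
  ring

/-- concatenation lemma: if `A = a_1·…·a_k` and `B = b_1·…·b_k`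
with all blocks from the family `𝒥(D) = {B_0^D,…,B_D^D}`, then
`δ(A,B) = max_i δ(a_i,b_i)`. -/
theorem delta_concat_blocks (D k : ℕ) (hD : 0 < D) (hk : 0 < k)
    (r s : ℕ → ℕ) (hr : ∀ i < k, r i ≤ D) (hs : ∀ i < k, s i ≤ D) :
    delta (k * (2 * D)) (Nat.mul_pos hk (by omega))
        (fun p => Bjob D (r (p / (2 * D))) (p % (2 * D)))
        (fun p => Bjob D (s (p / (2 * D))) (p % (2 * D))) =
      (Finset.range k).sup' (Finset.nonempty_range_iff.mpr hk.ne')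
        (fun i => delta (2 * D) (by omega) (Bjob D (r i)) (Bjob D (s i))) := by
  unfold delta
  apply le_antisymm
  · apply Finset.sup'_le
    intro q hq
    rw [Finset.mem_range] at hq
    have h2D : 0 < 2 * D := by omega
    set j := q / (2*D) with hjdef
    set t := q % (2*D) with htdef
    have hj : j < k := Nat.div_lt_iff_lt_mul h2D |>.mpr (by omega)
    have ht : t < 2*D := Nat.mod_lt _ h2D
    have hq' : q = j*(2*D)+t := by
      rw [mul_comm]; exact (Nat.div_add_mod q (2*D)).symm
    have key := term_eq D k hD r s hr hs j t hj ht
    rw [hq'] at *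
    refine le_trans ?_ (Finset.le_sup' _ (Finset.mem_range.mpr hj))
    refine le_trans (le_of_eq key) ?_
    exact Finset.le_sup' (fun q => (∑ k ∈ Finset.range (q + 1), Bjob D (r j) k) -
      ∑ k ∈ Finset.range q, Bjob D (s j) k) (Finset.mem_range.mpr ht)
  · apply Finset.sup'_le
    intro j hj
    rw [Finset.mem_range] at hj
    apply Finset.sup'_le
    intro t ht
    rw [Finset.mem_range] at ht
    have key := term_eq D k hD r s hr hs j t hj ht
    have hmem : j*(2*D)+t < k*(2*D) := by
      have h4 : (j+1)*(2*D) = j*(2*D)+2*D := by ring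
      calc j*(2*D)+t < (j+1)*(2*D) := by omega
      _ ≤ k*(2*D) := Nat.mul_le_mul_right _ (by omega)
    refine le_trans (le_of_eq key.symm) ?_
    exact Finset.le_sup' (fun q => (∑ p ∈ Finset.range (q + 1),
        Bjob D (r (p / (2 * D))) (p % (2 * D))) -
      ∑ p ∈ Finset.range q, Bjob D (s (p / (2 * D))) (p % (2 * D)))
      (Finset.mem_range.mpr hmem)
end

section
/- Gadget lemma: for any N ∈ ℕ and D ∈ ℕ, there exist N jobs H_1,…,H_N, each on the same number of machines O(D log N) and each with the same total processing time O(D log N), such that δ(H_i,H_i) = 1 for all i and δ(H_i,H_j) = D for all i ≠ j. -/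
/-- bit `t` of the balanced bitstring associated to `i` (length `2k`). -/
def gbit (k i t : ℕ) : Bool := if t < k then i.testBit t else !(i.testBit (t - k))

/-- operation at offset `r` of the block for bit `b`. -/
def gop (D : ℕ) (b : Bool) (r : ℕ) : ℕ :=
  if b then (if r < D then 1 else 0) else (if r < D then 0 else 1)

/-- partial sum of a block up to (excluding) offset `r`. -/
def gphi (D : ℕ) (b : Bool) (r : ℕ) : ℕ := if b then min r D else r - min r D

/-- the job associated to `i`. -/
def gjob (k D i q : ℕ) : ℕ := gop D (gbit k i (q / (2 * D))) (q % (2 * D))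

lemma gop_le_one (D : ℕ) (b : Bool) (r : ℕ) : gop D b r ≤ 1 := by
  unfold gop; split <;> split <;> omega

lemma gjob_le_one (k D i q : ℕ) : gjob k D i q ≤ 1 := gop_le_one _ _ _

lemma gprefix (k D i : ℕ) (hD : 0 < D) (q : ℕ) :
    ∑ t ∈ Finset.range q, gjob k D i t
      = D * (q / (2 * D)) + gphi D (gbit k i (q / (2 * D))) (q % (2 * D)) := by
  induction q with
  | zero => simp [gphi]
  | succ q ih =>
    have hE : 0 < 2 * D := by omega
    rw [Finset.sum_range_succ, ih]
    set a := q / (2 * D) with ha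
    set r := q % (2 * D) with hrdef
    have hr : r < 2 * D := Nat.mod_lt _ hE
    have hq : q = 2 * D * a + r := by
      rw [ha, hrdef]; exact (Nat.div_add_mod q (2 * D)).symm
    by_cases hcase : r + 1 < 2 * D
    · have hq1 : q + 1 = 2 * D * a + (r + 1) := by omega
      have hdiv : (q + 1) / (2 * D) = a := by
        rw [hq1, Nat.mul_add_div hE, Nat.div_eq_of_lt hcase]; omega
      have hmod : (q + 1) % (2 * D) = r + 1 := by
        rw [hq1, Nat.mul_add_mod, Nat.mod_eq_of_lt hcase]
      rw [hdiv, hmod]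
      unfold gjob gphi gop
      rw [← ha, ← hrdef]
      cases gbit k i a <;> simp <;> split_ifs <;> omega
    · have hrE : r = 2 * D - 1 := by omega
      have hq1 : q + 1 = 2 * D * (a + 1) := by
        have : 2 * D * (a + 1) = 2 * D * a + 2 * D := by ring
        omega
      have hdiv : (q + 1) / (2 * D) = a + 1 := by
        rw [hq1, Nat.mul_div_cancel_left _ hE]
      have hmod : (q + 1) % (2 * D) = 0 := by
        rw [hq1, Nat.mul_mod_right]
      rw [hdiv, hmod]
      unfold gjob gphi gop
      rw [← ha, ← hrdef]
      have hDa : D * (a + 1) = D * a + D := by ring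
      cases gbit k i a <;> cases gbit k i (a + 1) <;> simp <;> split_ifs <;> omega

lemma key_le (D : ℕ) (hD : 0 < D) (bi bj : Bool) (r : ℕ) (hr : r < 2 * D) :
    gop D bi r + gphi D bi r ≤ D + gphi D bj r := by
  cases bi <;> cases bj <;> simp [gop, gphi] <;> split_ifs <;> omega

lemma exists_good_block (k : ℕ) {i j : ℕ} (hi : i < 2 ^ k) (hj : j < 2 ^ k)
    (hij : i ≠ j) : ∃ a, a < 2 * k ∧ gbit k i a = true ∧ gbit k j a = false := by
  have hex : ∃ t, i.testBit t ≠ j.testBit t := by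
    by_contra h; push_neg at h; exact hij (Nat.eq_of_testBit_eq h)
  obtain ⟨t, ht⟩ := hex
  have htk : t < k := by
    by_contra hk
    push_neg at hk
    have h1 : i.testBit t = false :=
      Nat.testBit_lt_two_pow (lt_of_lt_of_le hi (Nat.pow_le_pow_right (by norm_num) hk))
    have h2 : j.testBit t = false :=
      Nat.testBit_lt_two_pow (lt_of_lt_of_le hj (Nat.pow_le_pow_right (by norm_num) hk))
    exact ht (h1.trans h2.symm)
  cases hbi : i.testBit t
  · -- i's bit is false, j's bit is true; use complement block t + k
    have hbj : j.testBit t = true := by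
      cases hbj : j.testBit t
      · exact absurd (hbi.trans hbj.symm) ht
      · rfl
    refine ⟨t + k, by omega, ?_, ?_⟩ <;>
      simp [gbit, Nat.add_sub_cancel, hbi, hbj, htk]
  · have hbj : j.testBit t = false := by
      cases hbj : j.testBit t
      · rfl
      · exact absurd (hbi.trans hbj.symm) ht
    refine ⟨t, by omega, ?_, ?_⟩ <;> simp [gbit, htk, hbi, hbj]

/-- gadget lemma: there is a universal constant `c` such that for
all `N, D ≥ 1` there are `N` jobs on a common number of machines `M = O(D log N)`,
each of total processing time `O(D log N)`, with nonnegative operation lengths,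
such that `δ(H_i,H_i) = 1` and `δ(H_i,H_j) = D` for `i ≠ j`. -/
theorem gadget_jobs :
    ∃ c : ℕ, 0 < c ∧ ∀ N D : ℕ, 0 < N → 0 < D →
      ∃ (M : ℕ) (hM : 0 < M) (H : Fin N → ℕ → ℝ),
        M ≤ c * D * (Nat.log 2 N + 1) ∧
        (∀ i j, 0 ≤ H i j) ∧
        (∀ i, ∑ k ∈ Finset.range M, H i k ≤ (c * D * (Nat.log 2 N + 1) : ℝ)) ∧
        (∀ i, delta M hM (H i) (H i) = 1) ∧
        (∀ i j, i ≠ j → delta M hM (H i) (H j) = (D : ℝ)) := by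
  refine ⟨4, by norm_num, fun N D hN hD => ?_⟩
  set k := Nat.log 2 N + 1 with hk
  have hk1 : 1 ≤ k := by omega
  have hNk : N < 2 ^ k := Nat.lt_pow_succ_log_self (by norm_num) N
  set M := 2 * D * (2 * k) with hM
  have hMpos : 0 < M := by positivity
  refine ⟨M, hMpos, fun i q => ((gjob k D i.val q : ℕ) : ℝ), ?_, ?_, ?_, ?_, ?_⟩
  · exact le_of_eq (by rw [hM, hk]; ring)
  · intro i j; positivity
  · intro i
    beta_reduce
    rw [← Nat.cast_sum, gprefix k D i.val hD M]
    have hdiv : M / (2 * D) = 2 * k := by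
      rw [hM, Nat.mul_div_cancel_left _ (by omega : 0 < 2 * D)]
    have hmod : M % (2 * D) = 0 := by rw [hM, Nat.mul_mod_right]
    rw [hdiv, hmod]
    have h0 : gphi D (gbit k i.val (2 * k)) 0 = 0 := by
      unfold gphi; split <;> simp
    rw [h0]
    have heq : (4 : ℕ) * D * (Nat.log 2 N + 1) = D * (4 * k) := by rw [hk]; ring
    have hle : D * (2 * k) + 0 ≤ D * (4 * k) := by
      have := Nat.mul_le_mul (le_refl D) (show 2 * k ≤ 4 * k by omega)
      omega
    calc ((D * (2 * k) + 0 : ℕ) : ℝ) ≤ ((D * (4 * k) : ℕ) : ℝ) := by exact_mod_cast hle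
      _ = ((4 * D * (Nat.log 2 N + 1) : ℕ) : ℝ) := by rw [heq]
      _ = ((4 * D : ℕ) : ℝ) * ((Nat.log 2 N + 1 : ℕ) : ℝ) := by push_cast; ring
      _ = (4 * D * (Nat.log 2 N + 1) : ℝ) := by push_cast; ring
  · -- δ(H_i, H_i) = 1
    intro i
    unfold delta
    beta_reduce
    apply le_antisymm
    · apply Finset.sup'_le
      intro q _
      rw [Finset.sum_range_succ]
      have h1 : ((gjob k D i.val q : ℕ) : ℝ) ≤ 1 := by
        exact_mod_cast gjob_le_one k D i.val q
      linarith
    · set q0 : ℕ := if gbit k i.val 0 then 0 else D with hq0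
      have hq0M : q0 ∈ Finset.range M := by
        rw [Finset.mem_range, hq0]
        have h4 : M = 4 * (D * k) := by rw [hM]; ring
        have hDk : D ≤ D * k := Nat.le_mul_of_pos_right D (by omega)
        split <;> omega
      have hval : gjob k D i.val q0 = 1 := by
        unfold gjob gop
        cases hb : gbit k i.val 0
        · have hq0D : q0 = D := by rw [hq0, hb]; simp
          rw [hq0D, Nat.div_eq_of_lt (by omega), Nat.mod_eq_of_lt (by omega), hb]
          simp
        · have hq00 : q0 = 0 := by rw [hq0, hb]; simp
          rw [hq00]; simp [hb, hD]
      refine le_trans ?_ (Finset.le_sup' _ hq0M)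
      rw [Finset.sum_range_succ, hval]
      simp
  · -- δ(H_i, H_j) = D for i ≠ j
    intro i j hij
    have hi2 : i.val < 2 ^ k := lt_trans i.isLt hNk
    have hj2 : j.val < 2 ^ k := lt_trans j.isLt hNk
    have hijv : i.val ≠ j.val := fun h => hij (Fin.ext h)
    unfold delta
    beta_reduce
    apply le_antisymm
    · apply Finset.sup'_le
      intro q _
      rw [Finset.sum_range_succ, ← Nat.cast_sum, ← Nat.cast_sum,
        gprefix k D i.val hD q, gprefix k D j.val hD q]
      set a := q / (2 * D)
      set r := q % (2 * D)
      have hr : r < 2 * D := Nat.mod_lt _ (by omega)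
      have hkey := key_le D hD (gbit k i.val a) (gbit k j.val a) r hr
      have hje : gjob k D i.val q = gop D (gbit k i.val a) r := rfl
      rw [hje]
      push_cast
      have : (gop D (gbit k i.val a) r : ℝ) + gphi D (gbit k i.val a) r
          ≤ (D : ℝ) + gphi D (gbit k j.val a) r := by exact_mod_cast hkey
      linarith
    · obtain ⟨a0, ha0, hbi, hbj⟩ := exists_good_block k hi2 hj2 hijv
      set q0 : ℕ := 2 * D * a0 + (D - 1) with hq0
      have hq0M : q0 ∈ Finset.range M := by
        rw [Finset.mem_range, hq0]
        have h1 : 2 * D * (a0 + 1) ≤ 2 * D * (2 * k) := Nat.mul_le_mul le_rfl (by omega)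
        have h2 : 2 * D * (a0 + 1) = 2 * D * a0 + 2 * D := by ring
        omega
      have hdiv : q0 / (2 * D) = a0 := by
        rw [hq0, Nat.mul_add_div (by omega), Nat.div_eq_of_lt (by omega)]
        omega
      have hmod : q0 % (2 * D) = D - 1 := by
        rw [hq0, Nat.mul_add_mod, Nat.mod_eq_of_lt (by omega)]
      refine le_trans ?_ (Finset.le_sup' _ hq0M)
      rw [Finset.sum_range_succ, ← Nat.cast_sum, ← Nat.cast_sum,
        gprefix k D i.val hD q0, gprefix k D j.val hD q0, hdiv, hmod]
      have hje : gjob k D i.val q0 = gop D (gbit k i.val a0) (D - 1) := by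
        unfold gjob; rw [hdiv, hmod]
      rw [hje, hbi, hbj]
      have h1 : gop D true (D - 1) = 1 := by unfold gop; simp; omega
      have h2 : gphi D true (D - 1) = D - 1 := by
        unfold gphi; simp <;> omega
      have h3 : gphi D false (D - 1) = 0 := by
        unfold gphi; simp <;> omega
      rw [h1, h2, h3]
      push_cast [Nat.cast_sub (by omega : 1 ≤ D)]
      ring_nf
      linarith
end

section
/- Path normalization lemma: for the split construction d' above, any Hamiltonian path in G' can be transformed, without increasing its total weight, into a Hamiltonian path that begins at v_out and ends at v_in; hence the minimum Hamiltonian path weight is attained by a path from v_out to v_in. -/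
/-!
In the split graph the arcs into `v_out` and out of `v_in` cost `2W` and every other arc costs
at most `W`. A Hamiltonian path is normalized in two moves. First rotate it, as a cut-open tour,
so that it starts at `v_out`: this drops the arc into `v_out` and adds one arc of weight at most
`2W`. Then move `v_in` from its place `x, v_in, e, …, l` to the end: this trades `x → v_in` and
`v_in → e`, of total weight at least `2W`, for `x → e` and `l → v_in`, of weight at most `W` each.
-/

/-- Weight of the Hamiltonian path visiting the vertices in the order
`σ 0, σ 1, …, σ (m-1)`. -/
def pathWeight {V : Type*} (m : ℕ) (d : V → V → ℕ) (σ : Fin m → V) : ℕ :=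
  ∑ i : Fin m, if h : (i : ℕ) + 1 < m then d (σ i) (σ ⟨(i : ℕ) + 1, h⟩) else 0

/-- Vertex set of the split construction: `inl x` are the original vertices
other than `v`, `inr true` is `v_out`, `inr false` is `v_in`. -/
abbrev SplitV (n : ℕ) (v : Fin n) := ({x : Fin n // x ≠ v}) ⊕ Bool

/-- Arc weights of the split construction. -/
def splitD {n : ℕ} (d : Fin n → Fin n → ℕ) (v : Fin n) (W : ℕ) :
    SplitV n v → SplitV n v → ℕ
  | Sum.inl x, Sum.inl y => d x.1 y.1
  | Sum.inr true, Sum.inl y => d v y.1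
  | Sum.inl x, Sum.inr false => d x.1 v
  | Sum.inr true, Sum.inr false => 0
  | _, _ => 2 * W

theorem List.getLastD_append {α : Type*} (l l' : List α) (a : α) :
    (l ++ l').getLastD a = l'.getLastD (l.getLastD a) := by
  induction l generalizing a with
  | nil => rfl
  | cons b l ih => simp only [List.cons_append, List.getLastD_cons, ih]

namespace PathNormalization

section Walks

variable {α : Type*} (D : α → α → ℕ)

def walkFrom : α → List α → ℕ
  | _, [] => 0
  | x, a :: l => D x a + walkFrom a l

def walkWeight : List α → ℕ
  | [] => 0
  | a :: l => walkFrom D a l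

@[simp] theorem walkFrom_nil (x : α) : walkFrom D x [] = 0 := rfl

@[simp] theorem walkFrom_cons (x a : α) (l : List α) :
    walkFrom D x (a :: l) = D x a + walkFrom D a l := rfl

@[simp] theorem walkWeight_cons (a : α) (l : List α) : walkWeight D (a :: l) = walkFrom D a l :=
  rfl

theorem walkFrom_append (x : α) (l l' : List α) :
    walkFrom D x (l ++ l') = walkFrom D x l + walkFrom D (l.getLastD x) l' := by
  induction l generalizing x with
  | nil => simp
  | cons a l ih => simp only [List.cons_append, walkFrom_cons, ih, List.getLastD_cons, add_assoc]

theorem pathWeight_succ_succ {m : ℕ} (σ : Fin (m + 2) → α) :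
    pathWeight (m + 2) D σ = D (σ 0) (σ 1) + pathWeight (m + 1) D (fun i => σ i.succ) := by
  rw [pathWeight, Fin.sum_univ_succ, pathWeight]
  congr 1
  refine Finset.sum_congr rfl fun i _ => ?_
  by_cases h : (i : ℕ) + 1 < m + 1
  · rw [dif_pos (by simpa using h), dif_pos h]
    rfl
  · rw [dif_neg (by simpa using h), dif_neg h]

theorem pathWeight_eq_walkWeight {m : ℕ} (σ : Fin (m + 1) → α) :
    pathWeight (m + 1) D σ = walkWeight D (List.ofFn σ) := by
  induction m with
  | zero => simp [pathWeight, walkWeight]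
  | succ m ih =>
    rw [pathWeight_succ_succ, ih, List.ofFn_succ, List.ofFn_succ (n := m + 1)]
    simp only [walkWeight_cons, List.ofFn_succ, walkFrom_cons]
    rfl

/-- Both paths are the same closed tour cut open at one arc: the new cut is at the arc into `s`,
which is the heaviest one. -/
theorem walkWeight_rotate_le {s : α} (hs : ∀ a b c, D b c ≤ D a s) (C E : List α) :
    walkWeight D (s :: E ++ C) ≤ walkWeight D (C ++ s :: E) := by
  rcases C with _ | ⟨c, C⟩
  · simp
  · simp only [List.cons_append, walkWeight_cons, walkFrom_append, walkFrom_cons]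
    linarith [hs (C.getLastD c) (E.getLastD s) c]

theorem walkFrom_move_head_to_end_le {x t e : α} {E : List α}
    (h : D x e + D (E.getLastD e) t ≤ D x t + D t e) :
    walkFrom D x (e :: E ++ [t]) ≤ walkFrom D x (t :: e :: E) := by
  simp only [List.cons_append, walkFrom_cons, walkFrom_append, walkFrom_nil]
  linarith

variable {s t : α} {W : ℕ}

theorem exists_perm_walkWeight_le (hin : ∀ a, D a s = 2 * W) (hout : ∀ b, D t b = 2 * W)
    (hle : ∀ a b, a ≠ t → b ≠ s → D a b ≤ W) (hst : s ≠ t) {L : List α} (hnd : L.Nodup)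
    (hs : s ∈ L) (ht : t ∈ L) :
    ∃ M, (s :: M ++ [t]).Perm L ∧ walkWeight D (s :: M ++ [t]) ≤ walkWeight D L := by
  have hmax : ∀ a b, D a b ≤ 2 * W := by
    intro a b
    by_cases ha : a = t
    · rw [ha, hout]
    by_cases hb : b = s
    · rw [hb, hin]
    · linarith [hle a b ha hb]
  obtain ⟨C, E, rfl⟩ := List.append_of_mem hs
  have hrot := walkWeight_rotate_le D (fun a b c => (hin a).symm ▸ hmax b c) C E
  have hperm : (s :: E ++ C).Perm (C ++ s :: E) := List.perm_append_comm
  have ht' : t ∈ E ++ C := by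
    simpa [hst.symm] using hperm.mem_iff.mpr ht
  obtain ⟨E1, E2, hEC⟩ := List.append_of_mem ht'
  rw [List.cons_append, hEC] at hrot hperm
  rcases E2 with _ | ⟨e, E2⟩
  · exact ⟨E1, by simpa using hperm, by simpa using hrot⟩
  refine ⟨E1 ++ e :: E2, ?_, le_trans ?_ hrot⟩
  · refine List.Perm.trans ?_ hperm
    simpa using (List.perm_append_singleton t (e :: E2)).append_left E1
  obtain ⟨hsE, htE, -⟩ : s ∉ E1 ++ t :: e :: E2 ∧ t ∉ E1 ++ e :: E2 ∧ _ := by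
    have hnd := hperm.nodup_iff.mpr hnd
    rwa [List.nodup_cons, List.nodup_middle, List.nodup_cons] at hnd
  simp only [List.cons_append, List.append_assoc, walkWeight_cons, walkFrom_append]
  gcongr
  apply walkFrom_move_head_to_end_le
  have hx : E1.getLastD s ≠ t := fun h => by
    have := h ▸ List.getLastD_mem_cons (l := E1) (a := s)
    simp_all
  have hl : E2.getLastD e ≠ t := fun h => by
    have := h ▸ List.getLastD_mem_cons (l := E2) (a := e)
    simp_all
  have he : e ≠ s := fun h => by simp_all
  linarith [hle _ e hx he, hle _ t hl hst.symm, hout e]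

end Walks

theorem exists_equiv_ofFn_eq {α : Type*} {m : ℕ} {L : List α} (hnd : L.Nodup)
    (hmem : ∀ a, a ∈ L) (hlen : L.length = m) : ∃ σ : Fin m ≃ α, List.ofFn σ = L := by
  classical
  subst hlen
  exact ⟨hnd.getEquivOfForallMemList L hmem, List.ofFn_get L⟩

theorem zero_and_last_of_ofFn_eq {α : Type*} {m : ℕ} {σ : Fin (m + 1) → α} {s t : α} {M : List α}
    (h : List.ofFn σ = s :: M ++ [t]) : σ 0 = s ∧ σ (Fin.last m) = t := by
  constructor
  · simpa using congrArg List.head? h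
  · rw [List.ofFn_succ', List.concat_eq_append] at h
    exact List.singleton_inj.mp (List.append_inj' h rfl).2

variable {n : ℕ} {d : Fin n → Fin n → ℕ} {v : Fin n} {W : ℕ}

theorem splitD_into_out (a : SplitV n v) : splitD d v W a (Sum.inr true) = 2 * W := by
  rcases a with _ | (_ | _) <;> rfl

theorem splitD_from_in (b : SplitV n v) : splitD d v W (Sum.inr false) b = 2 * W := by
  rcases b with _ | (_ | _) <;> rfl

theorem splitD_le (hbd : ∀ x y, d x y ≤ W) (a b : SplitV n v) (ha : a ≠ Sum.inr false)
    (hb : b ≠ Sum.inr true) : splitD d v W a b ≤ W := by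
  rcases a with x | (_ | _) <;> rcases b with y | (_ | _) <;> first
    | exact hbd _ _ | exact Nat.zero_le W | exact absurd rfl ha | exact absurd rfl hb

theorem exists_normalized_equiv (hbd : ∀ x y, d x y ≤ W) (π : Fin (n + 1) ≃ SplitV n v) :
    ∃ π' : Fin (n + 1) ≃ SplitV n v,
      π' 0 = Sum.inr true ∧ π' (Fin.last n) = Sum.inr false ∧
      pathWeight (n + 1) (splitD d v W) π' ≤ pathWeight (n + 1) (splitD d v W) π := by
  have hmem : ∀ a, a ∈ List.ofFn π := fun a =>
    List.mem_ofFn.mpr ⟨π.symm a, π.apply_symm_apply a⟩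
  obtain ⟨M, hperm, hle⟩ := exists_perm_walkWeight_le (splitD d v W) splitD_into_out
    splitD_from_in (splitD_le hbd) (by simp) (List.nodup_ofFn.mpr π.injective) (hmem _) (hmem _)
  obtain ⟨π', hπ'⟩ := exists_equiv_ofFn_eq (hperm.nodup_iff.mpr (List.nodup_ofFn.mpr π.injective))
    (fun a => hperm.mem_iff.mpr (hmem a)) (by rw [hperm.length_eq, List.length_ofFn])
  refine ⟨π', (zero_and_last_of_ofFn_eq hπ').1, (zero_and_last_of_ofFn_eq hπ').2, ?_⟩
  rw [pathWeight_eq_walkWeight, pathWeight_eq_walkWeight, hπ']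
  exact hle

end PathNormalization

theorem path_normalization_general (n : ℕ) (d : Fin n → Fin n → ℕ)
    (W : ℕ) (v : Fin n)
    (hbd : ∀ x y, d x y ≤ W) :
    (∀ π : Fin (n + 1) ≃ SplitV n v,
      ∃ π' : Fin (n + 1) ≃ SplitV n v,
        π' 0 = Sum.inr true ∧ π' (Fin.last n) = Sum.inr false ∧
        pathWeight (n + 1) (splitD d v W) π' ≤
          pathWeight (n + 1) (splitD d v W) π) ∧
    sInf {c | ∃ π : Fin (n + 1) ≃ SplitV n v,
        c = pathWeight (n + 1) (splitD d v W) π} =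
      sInf {c | ∃ π : Fin (n + 1) ≃ SplitV n v,
        π 0 = Sum.inr true ∧ π (Fin.last n) = Sum.inr false ∧
        c = pathWeight (n + 1) (splitD d v W) π} := by
  have hnorm := PathNormalization.exists_normalized_equiv (v := v) hbd
  refine ⟨hnorm, csInf_eq_csInf_of_forall_exists_le ?_ ?_⟩
  · rintro _ ⟨π, rfl⟩
    obtain ⟨π', h0, hlast, hle⟩ := hnorm π
    exact ⟨_, ⟨π', h0, hlast, rfl⟩, hle⟩
  · rintro _ ⟨π, -, -, rfl⟩
    exact ⟨_, ⟨π, rfl⟩, le_rfl⟩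

/-- path normalization: any Hamiltonian path in `G'` can be
transformed, without increasing its weight, into one that starts at `v_out`
and ends at `v_in`; hence the minimum Hamiltonian path weight is attained by
a path from `v_out` to `v_in`. -/
theorem path_normalization (n : ℕ) (hn : 0 < n) (d : Fin n → Fin n → ℕ)
    (W : ℕ) (v : Fin n)
    (hself : ∀ x, d x x = 0)
    (htri : ∀ x y z, d x z ≤ d x y + d y z)
    (hbd : ∀ x y, d x y ≤ W) :
    (∀ π : Fin (n + 1) ≃ SplitV n v,
      ∃ π' : Fin (n + 1) ≃ SplitV n v,
        π' 0 = Sum.inr true ∧ π' (Fin.last n) = Sum.inr false ∧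
        pathWeight (n + 1) (splitD d v W) π' ≤
          pathWeight (n + 1) (splitD d v W) π) ∧
    sInf {c | ∃ π : Fin (n + 1) ≃ SplitV n v,
        c = pathWeight (n + 1) (splitD d v W) π} =
      sInf {c | ∃ π : Fin (n + 1) ≃ SplitV n v,
        π 0 = Sum.inr true ∧ π (Fin.last n) = Sum.inr false ∧
        c = pathWeight (n + 1) (splitD d v W) π} :=
  path_normalization_general n d W v hbd
end

section
/- Blow-up by disjoint copies with uniform bridging cost: let G' = (V', d') be a semimetric ATSP(path) instance with maximum arc weight W', and let Ĝ be formed from N disjoint copies of G' where every arc between vertices of different copies has weight 2W'. Then the minimum Hamiltonian path weight in Ĝ equals N·OPT' + 2W'(N−1), where OPT' is the minimum Hamiltonian path weight in G'. Moreover, from any Hamiltonian path of weight C in Ĝ one can extract a Hamiltonian path in G' of weight at most (C − 2W'(N−1))/N. -/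
/-- Arc weights of the blow-up: `N` disjoint copies of `G'`, with every arc
between different copies of weight `2W'`. -/
def blowupD {n N : ℕ} (d : Fin n → Fin n → ℕ) (W : ℕ) :
    Fin n × Fin N → Fin n × Fin N → ℕ :=
  fun x y => if x.2 = y.2 then d x.1 y.1 else 2 * W

open Finset

lemma sum_ne_single_aux {N : ℕ} (j0 : Fin N) (c : ℕ) :
    ∑ j : Fin N, (if j = j0 then 0 else c) = c * (N - 1) := by
  rw [← Finset.sum_erase_add _ _ (Finset.mem_univ j0), if_pos rfl, add_zero,
    Finset.sum_congr rfl (fun j hj => if_neg (Finset.ne_of_mem_erase hj)),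
    Finset.sum_const, Finset.card_erase_of_mem (Finset.mem_univ _), Finset.card_univ,
    Fintype.card_fin, smul_eq_mul]
  exact Nat.mul_comm _ _

lemma extract_aux (n N : ℕ) (hn : 0 < n) (hN : 0 < N) (d : Fin n → Fin n → ℕ) (W : ℕ)
    (hbd : ∀ x y, d x y ≤ W) (π : Fin (n * N) ≃ Fin n × Fin N) :
    ∃ σ : Fin n ≃ Fin n,
      N * pathWeight n d σ + 2 * W * (N - 1) ≤ pathWeight (n * N) (blowupD d W) π := by
  have hm0 : 0 < n * N := Nat.mul_pos hn hN
  set F : Fin (n * N) → ℕ := fun i =>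
    if h : (i : ℕ) + 1 < (n * N) then blowupD d W (π i) (π ⟨(i : ℕ) + 1, h⟩) else 0 with hF
  have hPW : pathWeight (n * N) (blowupD d W) π = ∑ i : Fin (n * N), F i := rfl
  set P : Fin N → Finset (Fin (n * N)) := fun j => Finset.univ.filter (fun i => (π i).2 = j) with hP
  have hPmem : ∀ j i, i ∈ P j ↔ (π i).2 = j := by intro j i; simp [hP]
  have hPcard : ∀ j, (P j).card = n := by
    intro j
    have h1 : P j = (Finset.univ.filter (fun p : Fin n × Fin N => p.2 = j)).map
        π.symm.toEmbedding := by
      ext i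
      simp only [hP, Finset.mem_filter, Finset.mem_univ, true_and, Finset.mem_map,
        Equiv.coe_toEmbedding, Equiv.symm_apply_eq]
      constructor
      · intro h; exact ⟨π i, ⟨h, rfl⟩⟩
      · rintro ⟨a, ha, rfl⟩; exact ha
    have h2 : (Finset.univ.filter (fun p : Fin n × Fin N => p.2 = j))
        = Finset.univ.map ⟨fun k : Fin n => (k, j), fun a b hab => (Prod.ext_iff.mp hab).1⟩ := by
      ext p
      rw [Finset.mem_filter, Finset.mem_map]
      constructor
      · rintro ⟨-, h⟩
        refine ⟨p.1, Finset.mem_univ _, ?_⟩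
        show (p.1, j) = p
        rw [← h]
      · rintro ⟨a, -, rfl⟩
        exact ⟨Finset.mem_univ _, rfl⟩
    rw [h1, Finset.card_map, h2, Finset.card_map, Finset.card_univ, Fintype.card_fin]
  set e : Fin N → Fin n → Fin (n * N) := fun j => (P j).orderEmbOfFin (hPcard j) with he
  have hemem : ∀ j k, e j k ∈ P j := fun j k => (P j).orderEmbOfFin_mem (hPcard j) k
  have hecopy : ∀ j k, (π (e j k)).2 = j := fun j k => (hPmem j (e j k)).1 (hemem j k)
  have hemono : ∀ j, StrictMono (e j) := fun j => OrderEmbedding.strictMono _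
  have hesurj : ∀ j i, i ∈ P j → ∃ k, e j k = i := by
    intro j i hi
    have hr : i ∈ Set.range (e j) := by
      rw [he]
      rw [Finset.range_orderEmbOfFin]
      exact hi
    exact hr
  have hnotmem : ∀ (j : Fin N) (k : Fin n) (i : Fin (n * N)), e j k < i →
      (∀ k' : Fin n, k < k' → i < e j k') → (π i).2 ≠ j := by
    intro j k i h1 h2 hc
    obtain ⟨k'', hk''⟩ := hesurj j i ((hPmem j i).2 hc)
    have hkk : k < k'' := (hemono j).lt_iff_lt.mp (by rw [hk'']; exact h1)
    have := h2 k'' hkk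
    rw [hk''] at this
    exact absurd this (lt_irrefl i)
  set σf : Fin N → Fin n → Fin n := fun j k => (π (e j k)).1 with hσf
  have hσinj : ∀ j, Function.Injective (σf j) := by
    intro j a b hab
    have hpe : π (e j a) = π (e j b) := Prod.ext hab (by rw [hecopy, hecopy])
    exact (hemono j).injective (π.injective hpe)
  set σe : Fin N → (Fin n ≃ Fin n) :=
    fun j => Equiv.ofBijective (σf j) (Finite.injective_iff_bijective.mp (hσinj j)) with hσe
  have hσeapp : ∀ j, ⇑(σe j) = σf j := fun j => rfl
  -- reindex the total sum
  have hEbij : Function.Bijective (fun p : Fin N × Fin n => e p.1 p.2) := by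
    rw [Fintype.bijective_iff_injective_and_card]
    constructor
    · rintro ⟨j, k⟩ ⟨j', k'⟩ hpq
      simp only at hpq
      have hj : j = j' := by rw [← hecopy j k, hpq, hecopy]
      subst hj
      have hk : k = k' := (hemono j).injective hpq
      rw [hk]
    · simp [Nat.mul_comm]
  have hsum : ∑ i : Fin (n * N), F i = ∑ j : Fin N, ∑ k : Fin n, F (e j k) :=
    calc ∑ i : Fin (n * N), F i = ∑ p : Fin N × Fin n, F (e p.1 p.2) :=
        (Fintype.sum_bijective _ hEbij _ _ (fun p => rfl)).symm
      _ = ∑ j : Fin N, ∑ k : Fin n, F (e j k) := Fintype.sum_prod_type _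
  have hlastk : n - 1 < n := by omega
  set lastk : Fin n := ⟨n - 1, hlastk⟩ with hlk
  have hlkv : (lastk : ℕ) = n - 1 := by rw [hlk]
  -- per-position bound
  have hterm : ∀ (j : Fin N) (k : Fin n),
      (if h : (k : ℕ) + 1 < n then d (σf j k) (σf j ⟨(k : ℕ) + 1, h⟩) else 0)
      + (if k = lastk then (if (e j k : ℕ) + 1 < (n * N) then 2 * W else 0) else 0)
      ≤ F (e j k) := by
    intro j k
    by_cases hk : (k : ℕ) + 1 < n
    · have hklast : k ≠ lastk := by
        intro h
        rw [h] at hk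
        simp only [hlk] at hk
        omega
      rw [dif_pos hk, if_neg hklast, add_zero]
      have hlt : e j k < e j ⟨(k : ℕ) + 1, hk⟩ := hemono j (by simp [Fin.lt_def])
      have him : (e j k : ℕ) + 1 < (n * N) :=
        lt_of_le_of_lt (Nat.succ_le_of_lt hlt) (e j ⟨(k : ℕ) + 1, hk⟩).2
      rw [hF]
      simp only [dif_pos him]
      set i' : Fin (n * N) := ⟨(e j k : ℕ) + 1, him⟩ with hi'def
      by_cases hi' : i' = e j ⟨(k : ℕ) + 1, hk⟩
      · rw [hi']
        unfold blowupD
        rw [if_pos (by rw [hecopy, hecopy])]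
      · have hcross : (π i').2 ≠ j := by
          apply hnotmem j k i'
          · exact Nat.lt_succ_self _
          · intro k' hk'
            have h1 : ((⟨(k : ℕ) + 1, hk⟩ : Fin n) : ℕ) ≤ (k' : ℕ) := hk'
            have h2 : e j ⟨(k : ℕ) + 1, hk⟩ ≤ e j k' := (hemono j).monotone h1
            have h3 : i' ≤ e j ⟨(k : ℕ) + 1, hk⟩ := by
              rw [Fin.le_def]
              exact Fin.lt_def.mp hlt
            exact lt_of_lt_of_le (lt_of_le_of_ne h3 hi') h2
        unfold blowupD
        rw [if_neg (by rw [hecopy]; exact fun h => hcross h.symm)]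
        exact le_trans (hbd _ _) (by omega)
    · have hkv : (k : ℕ) = n - 1 := by have := k.isLt; omega
      have hklast : k = lastk := Fin.ext (by rw [hkv, hlkv])
      rw [dif_neg hk, if_pos hklast, zero_add]
      by_cases him : (e j k : ℕ) + 1 < (n * N)
      · rw [if_pos him, hF]
        simp only [dif_pos him]
        set i' : Fin (n * N) := ⟨(e j k : ℕ) + 1, him⟩ with hi'def
        have hcross : (π i').2 ≠ j := by
          apply hnotmem j k i'
          · exact Nat.lt_succ_self _
          · intro k' hk'
            exfalso
            have h1 : (k : ℕ) < (k' : ℕ) := hk'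
            have := k'.isLt
            omega
        unfold blowupD
        rw [if_neg (by rw [hecopy]; exact fun h => hcross h.symm)]
      · rw [if_neg him, hF]
        simp [him]
  -- per-copy bound
  have hsumj : ∀ j, pathWeight n d (σe j) + (if (e j lastk : ℕ) + 1 < (n * N) then 2 * W else 0)
      ≤ ∑ k : Fin n, F (e j k) := by
    intro j
    have h1 := Finset.sum_le_sum (fun k (_ : k ∈ Finset.univ) => hterm j k)
    rw [Finset.sum_add_distrib, Finset.sum_ite_eq' Finset.univ lastk
      (fun k => if (e j k : ℕ) + 1 < (n * N) then 2 * W else 0), if_pos (Finset.mem_univ _)] at h1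
    exact h1
  -- the bridge count
  set lastm : Fin (n * N) := ⟨(n * N) - 1, by omega⟩ with hlm
  have hlmv : (lastm : ℕ) = (n * N) - 1 := by rw [hlm]
  set jstar : Fin N := (π lastm).2 with hjstar
  have hjs : ∀ j, ((e j lastk : ℕ) + 1 < (n * N) ↔ j ≠ jstar) := by
    intro j
    have hub : (e j lastk : ℕ) < (n * N) := (e j lastk).2
    constructor
    · intro h hj
      obtain ⟨k0, hk0⟩ := hesurj j lastm ((hPmem j lastm).2 hj.symm)
      have hk0le : k0 ≤ lastk := by
        rw [Fin.le_def, hlkv]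
        have := k0.isLt
        omega
      have h2 : e j k0 ≤ e j lastk := (hemono j).monotone hk0le
      rw [hk0] at h2
      have h3 : (lastm : ℕ) ≤ (e j lastk : ℕ) := Fin.le_def.mp h2
      rw [hlmv] at h3
      omega
    · intro hj
      by_contra h
      have hev : (e j lastk : ℕ) = (n * N) - 1 := by omega
      have heq : e j lastk = lastm := Fin.ext (by rw [hev, hlmv])
      exact hj (by rw [hjstar, ← heq, hecopy])
  have hbridge : ∑ j : Fin N, (if (e j lastk : ℕ) + 1 < (n * N) then 2 * W else 0)
      = 2 * W * (N - 1) := by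
    refine Eq.trans (Finset.sum_congr rfl (fun j _ => ?_)) (sum_ne_single_aux jstar (2 * W))
    by_cases hj : j = jstar
    · rw [if_neg (fun hc => ((hjs j).mp hc) hj), if_pos hj]
    · rw [if_pos ((hjs j).mpr hj), if_neg hj]
  -- choose the best copy
  obtain ⟨j0, _, hj0⟩ := Finset.exists_min_image (Finset.univ : Finset (Fin N))
    (fun j => pathWeight n d (σe j)) ⟨⟨0, hN⟩, Finset.mem_univ _⟩
  refine ⟨σe j0, ?_⟩
  have h2 : N * pathWeight n d (σe j0) ≤ ∑ j : Fin N, pathWeight n d (σe j) := by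
    calc N * pathWeight n d (σe j0)
        = ∑ _j : Fin N, pathWeight n d (σe j0) := by
          rw [Finset.sum_const, Finset.card_univ, Fintype.card_fin, smul_eq_mul]
      _ ≤ _ := Finset.sum_le_sum (fun j _ => hj0 j (Finset.mem_univ j))
  calc N * pathWeight n d (σe j0) + 2 * W * (N - 1)
      ≤ (∑ j : Fin N, pathWeight n d (σe j)) + 2 * W * (N - 1) :=
        Nat.add_le_add_right h2 _
    _ = ∑ j : Fin N, (pathWeight n d (σe j)
          + (if (e j lastk : ℕ) + 1 < (n * N) then 2 * W else 0)) := by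
        rw [Finset.sum_add_distrib, hbridge]
    _ ≤ ∑ j : Fin N, ∑ k : Fin n, F (e j k) := Finset.sum_le_sum (fun j _ => hsumj j)
    _ = pathWeight (n * N) (blowupD d W) π := by rw [hPW, hsum]

lemma upper_aux (n N : ℕ) (hn : 0 < n) (hN : 0 < N) (d : Fin n → Fin n → ℕ) (W : ℕ)
    (σ0 : Fin n ≃ Fin n) :
    ∃ π : Fin (n * N) ≃ Fin n × Fin N,
      pathWeight (n * N) (blowupD d W) π ≤ N * pathWeight n d σ0 + 2 * W * (N - 1) := by
  set m := n * N with hm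
  set ψ : Fin N × Fin n ≃ Fin m := finProdFinEquiv.trans (finCongr (Nat.mul_comm N n)) with hψ
  have hψval : ∀ (j : Fin N) (k : Fin n), ((ψ (j, k)) : ℕ) = (k : ℕ) + n * (j : ℕ) := by
    intro j k
    simp [hψ, finProdFinEquiv]
  set π : Fin m ≃ Fin n × Fin N :=
    ψ.symm.trans ((Equiv.prodComm _ _).trans (Equiv.prodCongr σ0 (Equiv.refl _))) with hπ
  have hπval : ∀ (j : Fin N) (k : Fin n), π (ψ (j, k)) = (σ0 k, j) := by
    intro j k
    simp [hπ]
  refine ⟨π, ?_⟩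
  set F : Fin m → ℕ := fun i =>
    if h : (i : ℕ) + 1 < m then blowupD d W (π i) (π ⟨(i : ℕ) + 1, h⟩) else 0 with hF
  have hPW : pathWeight m (blowupD d W) π = ∑ i : Fin m, F i := rfl
  have hsum : ∑ i : Fin m, F i = ∑ j : Fin N, ∑ k : Fin n, F (ψ (j, k)) :=
    calc ∑ i : Fin m, F i = ∑ p : Fin N × Fin n, F (ψ p) := (Equiv.sum_comp ψ F).symm
      _ = ∑ j : Fin N, ∑ k : Fin n, F (ψ (j, k)) := Fintype.sum_prod_type _
  have hlastk : n - 1 < n := by omega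
  set lastk : Fin n := ⟨n - 1, hlastk⟩ with hlk
  have hlkv : (lastk : ℕ) = n - 1 := by rw [hlk]
  have hlastj : N - 1 < N := by omega
  set lastj : Fin N := ⟨N - 1, hlastj⟩ with hlj
  have hljv : (lastj : ℕ) = N - 1 := by rw [hlj]
  have hterm : ∀ (j : Fin N) (k : Fin n), F (ψ (j, k)) ≤
      (if h : (k : ℕ) + 1 < n then d (σ0 k) (σ0 ⟨(k : ℕ) + 1, h⟩) else 0)
      + (if k = lastk then (if j = lastj then 0 else 2 * W) else 0) := by
    intro j k
    by_cases him : ((ψ (j, k)) : ℕ) + 1 < m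
    · by_cases hk : (k : ℕ) + 1 < n
      · have hnext : (⟨((ψ (j, k)) : ℕ) + 1, him⟩ : Fin m) = ψ (j, ⟨(k : ℕ) + 1, hk⟩) := by
          apply Fin.ext
          simp only [hψval]
          omega
        rw [hF]
        simp only [dif_pos him]
        rw [hnext, hπval, hπval]
        unfold blowupD
        rw [if_pos rfl]
        rw [dif_pos hk]
        exact Nat.le_add_right _ _
      · have hkv : (k : ℕ) = n - 1 := by have := k.isLt; omega
        have hklast : k = lastk := Fin.ext (by rw [hkv, hlkv])
        have hjlt : (j : ℕ) + 1 < N := by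
          have h1 : ((ψ (j, k)) : ℕ) + 1 = n * ((j : ℕ) + 1) := by
            rw [hψval, Nat.mul_succ]
            omega
          have h2 : n * ((j : ℕ) + 1) < n * N := by
            rw [← h1]
            exact him
          exact lt_of_mul_lt_mul_left h2 (Nat.zero_le n)
        have hjlast : j ≠ lastj := by
          intro h
          rw [h, hljv] at hjlt
          omega
        have hnext : (⟨((ψ (j, k)) : ℕ) + 1, him⟩ : Fin m)
            = ψ (⟨(j : ℕ) + 1, hjlt⟩, ⟨0, hn⟩) := by
          apply Fin.ext
          simp only [hψval, Nat.mul_succ]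
          omega
        rw [hF]
        simp only [dif_pos him]
        rw [hnext, hπval, hπval]
        unfold blowupD
        rw [if_neg (by intro h; have := congrArg Fin.val h; simp at this)]
        rw [dif_neg hk, if_pos hklast, if_neg hjlast]
        omega
    · rw [hF]
      simp only [dif_neg him]
      exact Nat.zero_le _
  have hbound : ∑ j : Fin N, ∑ k : Fin n, F (ψ (j, k))
      ≤ N * pathWeight n d σ0 + 2 * W * (N - 1) := by
    calc ∑ j : Fin N, ∑ k : Fin n, F (ψ (j, k))
        ≤ ∑ j : Fin N, ∑ k : Fin n,
            ((if h : (k : ℕ) + 1 < n then d (σ0 k) (σ0 ⟨(k : ℕ) + 1, h⟩) else 0)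
            + (if k = lastk then (if j = lastj then 0 else 2 * W) else 0)) :=
          Finset.sum_le_sum (fun j _ => Finset.sum_le_sum (fun k _ => hterm j k))
      _ = N * pathWeight n d σ0 + 2 * W * (N - 1) := by
          have hinner : ∀ j : Fin N, ∑ k : Fin n,
              ((if h : (k : ℕ) + 1 < n then d (σ0 k) (σ0 ⟨(k : ℕ) + 1, h⟩) else 0)
              + (if k = lastk then (if j = lastj then 0 else 2 * W) else 0))
              = pathWeight n d σ0 + (if j = lastj then 0 else 2 * W) := by
            intro j
            rw [Finset.sum_add_distrib, Finset.sum_ite_eq' Finset.univ lastk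
              (fun _ => if j = lastj then 0 else 2 * W), if_pos (Finset.mem_univ _)]
            rfl
          rw [Finset.sum_congr rfl (fun j _ => hinner j), Finset.sum_add_distrib,
            sum_ne_single_aux lastj (2 * W), Finset.sum_const, Finset.card_univ,
            Fintype.card_fin, smul_eq_mul]
  rw [hPW, hsum]
  exact hbound

/-- blow-up with uniform bridging cost: the minimum Hamiltonian
path weight in `Ĝ` equals `N·OPT' + 2W'(N−1)`, and from any Hamiltonian path
of weight `C` in `Ĝ` one can extract a Hamiltonian path in `G'` of weight at
most `(C − 2W'(N−1))/N`. -/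
theorem blowup_paths (n N : ℕ) (hn : 0 < n) (hN : 0 < N)
    (d : Fin n → Fin n → ℕ) (W : ℕ)
    (hself : ∀ x, d x x = 0)
    (htri : ∀ x y z, d x z ≤ d x y + d y z)
    (hbd : ∀ x y, d x y ≤ W) :
    sInf {c | ∃ π : Fin (n * N) ≃ Fin n × Fin N,
        c = pathWeight (n * N) (blowupD d W) π} =
      N * sInf {c | ∃ σ : Fin n ≃ Fin n, c = pathWeight n d σ} +
        2 * W * (N - 1) ∧
    ∀ π : Fin (n * N) ≃ Fin n × Fin N,
      ∃ σ : Fin n ≃ Fin n,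
        (pathWeight n d σ : ℝ) ≤
          ((pathWeight (n * N) (blowupD d W) π : ℝ) - 2 * W * (N - 1)) / N := by
  have hS'ne : {c | ∃ σ : Fin n ≃ Fin n, c = pathWeight n d σ}.Nonempty :=
    ⟨pathWeight n d (Equiv.refl (Fin n)), ⟨Equiv.refl _, rfl⟩⟩
  obtain ⟨σ0, hσ0⟩ := Nat.sInf_mem hS'ne
  constructor
  · apply le_antisymm
    · obtain ⟨π, hπ⟩ := upper_aux n N hn hN d W σ0
      refine le_trans (Nat.sInf_le ⟨π, rfl⟩) ?_
      rw [hσ0]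
      exact hπ
    · obtain ⟨π0, _⟩ := upper_aux n N hn hN d W σ0
      refine le_csInf ⟨pathWeight (n * N) (blowupD d W) π0, π0, rfl⟩ ?_
      rintro c ⟨π, rfl⟩
      obtain ⟨σ, hσ⟩ := extract_aux n N hn hN d W hbd π
      have h1 : sInf {c | ∃ σ : Fin n ≃ Fin n, c = pathWeight n d σ}
          ≤ pathWeight n d σ := Nat.sInf_le ⟨σ, rfl⟩
      calc N * sInf {c | ∃ σ : Fin n ≃ Fin n, c = pathWeight n d σ} + 2 * W * (N - 1)
          ≤ N * pathWeight n d σ + 2 * W * (N - 1) := by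
            exact Nat.add_le_add_right (Nat.mul_le_mul_left N h1) _
        _ ≤ _ := hσ
  · intro π
    obtain ⟨σ, hσ⟩ := extract_aux n N hn hN d W hbd π
    refine ⟨σ, ?_⟩
    have hNpos : (0 : ℝ) < (N : ℝ) := by exact_mod_cast hN
    rw [le_div_iff₀ hNpos]
    have h1 : ((N * pathWeight n d σ + 2 * W * (N - 1) : ℕ) : ℝ)
        ≤ ((pathWeight (n * N) (blowupD d W) π : ℕ) : ℝ) := by exact_mod_cast hσ
    have h2 : ((N - 1 : ℕ) : ℝ) = (N : ℝ) - 1 := by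
      rw [Nat.cast_sub hN]
      simp
    push_cast [h2] at h1
    linarith
end
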